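/- Work in the polynomial ring ℚ[x_2, x_3, x_4] and let ĝ(ζ) := ζ + x_2ζ^3 + x_3ζ^4 + x_4ζ^5 ∈ ℚ[x_2,x_3,x_4][[ζ]]. Define Δ̂_1(ζ) := ĝ(ζ) − ζ and Δ̂_{m+1}(ζ) := Δ̂_m(ĝ(ζ)) − Δ̂_m(ζ) for m ≥ 1. Then for every m ≥ 1, the coefficient of ζ^{2m+1} in Δ̂_m equals x_2^m·(2m−1)!!. -/

import Mathlib

/-!
Write `ĝ = ζ + ζ³q` with `q(0) = x₂`. Then `ĝ^i = ζ^i + i q ζ^{i+2} + O(ζ^{i+4})`, so for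
`f = c ζ^k + O(ζ^{k+1})` the composite `f ∘ ĝ = ∑ fᵢ ĝ^i` agrees with `f` up to order `k + 1`,
and at order `k + 2` only the term `i = k` adds something, namely `k x₂ c`. Hence each step
`f ↦ f ∘ ĝ - f` raises the order by two, and starting from `Δ̂₁ = x₂ζ³ + …` the leading
coefficient gets multiplied by `(2m+1) x₂` at step `m`.
-/

/-- Composition of formal power series: `f.comp g = f ∘ g`, the power series obtained by
substituting `g` into `f`.  (This gives the usual composition whenever the constant
coefficient of `g` is zero.) -/
noncomputable def PowerSeries.comp {R : Type*} [CommSemiring R] (f g : PowerSeries R) :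
    PowerSeries R :=
  PowerSeries.mk fun n =>
    ∑ i ∈ Finset.range (n + 1), PowerSeries.coeff i f * PowerSeries.coeff n (g ^ i)

/-- The polynomial ring `ℚ[x₂, x₃, x₄]`, with `x₂ = X 0`, `x₃ = X 1`, `x₄ = X 2`. -/
abbrev Rq : Type := MvPolynomial (Fin 3) ℚ

/-- The power series `ĝ(ζ) = ζ + x₂ζ³ + x₃ζ⁴ + x₄ζ⁵` over `ℚ[x₂, x₃, x₄]`. -/
noncomputable def ghat : PowerSeries Rq :=
  PowerSeries.X
    + PowerSeries.C (MvPolynomial.X 0 : Rq) * PowerSeries.X ^ 3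
    + PowerSeries.C (MvPolynomial.X 1 : Rq) * PowerSeries.X ^ 4
    + PowerSeries.C (MvPolynomial.X 2 : Rq) * PowerSeries.X ^ 5

open Nat

namespace PowerSeries

section CommSemiring

variable {R : Type*} [CommSemiring R]

theorem coeff_comp (f g : R⟦X⟧) (n : ℕ) :
    coeff n (f.comp g) = ∑ i ∈ Finset.range (n + 1), coeff i f * coeff n (g ^ i) :=
  coeff_mk _ _

theorem exists_X_add_X_pow_three_mul_pow_eq (q : R⟦X⟧) (i : ℕ) :
    ∃ r : R⟦X⟧,
      (X + X ^ 3 * q) ^ i = X ^ i + X ^ (i + 2) * (C (i : R) * q) + X ^ (i + 4) * r := by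
  induction i with
  | zero => exact ⟨0, by simp⟩
  | succ i ih =>
    obtain ⟨r, hr⟩ := ih
    refine ⟨C (i : R) * q ^ 2 + r + X ^ 2 * r * q, ?_⟩
    rw [pow_succ, hr, Nat.cast_succ, map_add, map_one]
    ring

theorem coeff_X_add_X_pow_three_mul_pow (q : R⟦X⟧) {i n : ℕ} (hn : n ≤ i + 2) :
    coeff n ((X + X ^ 3 * q) ^ i) =
      if n = i then 1 else if n = i + 2 then (i : R) * constantCoeff q else 0 := by
  obtain ⟨r, hr⟩ := exists_X_add_X_pow_three_mul_pow_eq q i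
  rw [hr, map_add, map_add, coeff_X_pow, coeff_X_pow_mul', coeff_X_pow_mul',
    if_neg (show ¬i + 4 ≤ n by omega), add_zero]
  by_cases h : n = i + 2
  · subst h
    simp
  · rw [if_neg (show ¬i + 2 ≤ n by omega), if_neg h, add_zero]

variable {f q : R⟦X⟧} {k : ℕ}

theorem coeff_mul_coeff_X_add_X_pow_three_mul_pow_eq_zero (hf : ∀ i < k, coeff i f = 0)
    {i n : ℕ} (hn : n ≤ k + 2) (hi : i ≠ n) (hik : i = k → n ≠ k + 2) :
    coeff i f * coeff n ((X + X ^ 3 * q) ^ i) = 0 := by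
  rcases lt_or_ge i k with hlt | hge
  · rw [hf i hlt, zero_mul]
  · rw [coeff_X_add_X_pow_three_mul_pow q (by omega), if_neg (Ne.symm hi),
      if_neg (by omega), mul_zero]

theorem coeff_comp_X_add_X_pow_three_mul_of_lt (hf : ∀ i < k, coeff i f = 0) {n : ℕ}
    (hn : n < k + 2) : coeff n (f.comp (X + X ^ 3 * q)) = coeff n f := by
  rw [coeff_comp, Finset.sum_eq_single n]
  · rw [coeff_X_add_X_pow_three_mul_pow q (by omega), if_pos rfl, mul_one]
  · rintro i - hin
    exact coeff_mul_coeff_X_add_X_pow_three_mul_pow_eq_zero hf hn.le hin fun _ => by omega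
  · simp

theorem coeff_comp_X_add_X_pow_three_mul_add_two (hf : ∀ i < k, coeff i f = 0) :
    coeff (k + 2) (f.comp (X + X ^ 3 * q)) =
      coeff (k + 2) f + k * constantCoeff q * coeff k f := by
  rw [coeff_comp, Finset.sum_eq_add (k + 2) k (by omega)]
  · rw [coeff_X_add_X_pow_three_mul_pow q (by omega), if_pos rfl, mul_one,
      coeff_X_add_X_pow_three_mul_pow q le_rfl, if_neg (by omega), if_pos rfl]
    ring
  · rintro i - ⟨hi, hi'⟩
    exact coeff_mul_coeff_X_add_X_pow_three_mul_pow_eq_zero hf le_rfl hi (absurd · hi')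
  · simp
  · simp

end CommSemiring

theorem coeff_of_comp_sub_self_recurrence {R : Type*} [CommRing R] (q : R⟦X⟧)
    (D : ℕ → R⟦X⟧) (hD1 : D 1 = X + X ^ 3 * q - X)
    (hD : ∀ m, 1 ≤ m → D (m + 1) = (D m).comp (X + X ^ 3 * q) - D m) {m : ℕ} (hm : 1 ≤ m) :
    (∀ n < 2 * m + 1, coeff n (D m) = 0) ∧
      coeff (2 * m + 1) (D m) = constantCoeff q ^ m * ((2 * m - 1)‼ : ℕ) := by
  induction m, hm using Nat.le_induction with
  | base =>
    rw [hD1, add_sub_cancel_left]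
    refine ⟨fun n hn => ?_, ?_⟩ <;> simp [coeff_X_pow_mul', *]
  | succ m hm ih =>
    obtain ⟨hlow, hlead⟩ := ih
    refine ⟨fun n hn => ?_, ?_⟩
    · rw [hD m hm, map_sub, coeff_comp_X_add_X_pow_three_mul_of_lt hlow (by omega), sub_self]
    · rw [show 2 * (m + 1) + 1 = 2 * m + 1 + 2 by omega, hD m hm, map_sub,
        coeff_comp_X_add_X_pow_three_mul_add_two hlow, add_sub_cancel_left, hlead,
        show 2 * (m + 1) - 1 = 2 * m + 1 by omega, Nat.doubleFactorial_add_one]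
      push_cast
      ring

end PowerSeries

theorem delta_hat_leading_coefficient
    (Δ : ℕ → PowerSeries Rq)
    (hΔ1 : Δ 1 = ghat - PowerSeries.X)
    (hΔ : ∀ m : ℕ, 1 ≤ m → Δ (m + 1) = PowerSeries.comp (Δ m) ghat - Δ m) :
    ∀ m : ℕ, 1 ≤ m →
      PowerSeries.coeff (2 * m + 1) (Δ m) =
        MvPolynomial.X 0 ^ m * (((2 * m - 1)‼ : ℕ) : Rq) := by
  intro m hm
  set q : PowerSeries Rq := PowerSeries.C (MvPolynomial.X 0)
    + PowerSeries.C (MvPolynomial.X 1) * PowerSeries.X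
    + PowerSeries.C (MvPolynomial.X 2) * PowerSeries.X ^ 2
  have hghat : ghat = PowerSeries.X + PowerSeries.X ^ 3 * q := by
    rw [ghat]
    ring
  have hq : PowerSeries.constantCoeff q = MvPolynomial.X 0 := by
    simp [q]
  rw [hghat] at hΔ1 hΔ
  rw [← hq]
  exact (PowerSeries.coeff_of_comp_sub_self_recurrence q Δ hΔ1 hΔ hm).2
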